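/- For a standard normal random variable X, the tail conditional variance Var[X | X < x] = 1 - xφ(x)/Φ(x) - φ(x)²/Φ(x)² is strictly increasing as a function of x on (-∞, 0). -/

import Mathlib

open MeasureTheory Real

/-- Standard normal density. -/
noncomputable def stdPdf (x : ℝ) : ℝ := (Real.sqrt (2 * Real.pi))⁻¹ * Real.exp (-x ^ 2 / 2)

/-- Standard normal distribution function. -/
noncomputable def stdCdf (x : ℝ) : ℝ := ∫ t in Set.Iic x, stdPdf t

/-!
Writing `φ, Φ` for `stdPdf x, stdCdf x`, the derivative of the tail variance is `φ Q / Φ³`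
with `Q = (x² - 1) Φ² + 3 x φ Φ + 2 φ²`. As a quadratic form in `(φ, Φ)` its discriminant
is `x² + 8`, so `8 Q = (4φ - (√(x²+8) - 3x) Φ) (4φ + (√(x²+8) + 3x) Φ)`, and both factors
are positive for `x < 0` as soon as `(√(x²+8) - 3x) Φ < 4 φ`. This Mills-ratio-type bound
holds because the gap `4φ / (√(x²+8) - 3x) - Φ` tends to `0` at `-∞` and is strictly
increasing on `(-∞, 0)`.
-/

open Filter Set ProbabilityTheory Topology

lemma StrictMonoOn.lt_of_tendsto_atBot {α β : Type*} [LinearOrder α] [NoMinOrder α]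
    [Preorder β] [TopologicalSpace β] [OrderClosedTopology β] {f : α → β} {a : α} {l : β}
    (hf : StrictMonoOn f (Iio a)) (hl : Tendsto f atBot (𝓝 l)) {x : α} (hx : x < a) :
    l < f x := by
  have : Nonempty α := ⟨x⟩
  obtain ⟨y, hyx⟩ := exists_lt x
  have hly : l ≤ f y := le_of_tendsto hl <| by
    filter_upwards [eventually_le_atBot y] with t hty
    exact hf.monotoneOn (hty.trans_lt (hyx.trans hx)) (hyx.trans hx) hty
  exact hly.trans_lt (hf (hyx.trans hx) hx hyx)

lemma strictMonoOn_of_hasDerivAt_pos {f f' : ℝ → ℝ} {s : Set ℝ} (hs : Convex ℝ s)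
    (hso : IsOpen s) (hf : ∀ x ∈ s, HasDerivAt f (f' x) x) (hf' : ∀ x ∈ s, 0 < f' x) :
    StrictMonoOn f s :=
  strictMonoOn_of_deriv_pos hs (fun x hx => (hf x hx).continuousAt.continuousWithinAt)
    fun x hx => by
      rw [hso.interior_eq] at hx
      rw [(hf x hx).deriv]
      exact hf' x hx

lemma hasDerivAt_integral_Iic {E : Type*} [NormedAddCommGroup E] [NormedSpace ℝ E]
    [CompleteSpace E] {f : ℝ → E} (hfi : Integrable f) (hfc : Continuous f) (x : ℝ) :
    HasDerivAt (fun y => ∫ t in Iic y, f t) (f x) x := by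
  have hsplit : (fun y => ∫ t in Iic y, f t) =
      fun y => (∫ t in Iic (x - 1), f t) + ∫ t in (x - 1)..y, f t := by
    funext y
    rw [← intervalIntegral.integral_Iic_sub_Iic hfi.integrableOn hfi.integrableOn,
      add_sub_cancel]
  rw [hsplit]
  exact (intervalIntegral.integral_hasDerivAt_right hfi.intervalIntegrable
    (hfc.stronglyMeasurableAtFilter _ _) hfc.continuousAt).const_add _

lemma stdPdf_eq_gaussianPDFReal : stdPdf = gaussianPDFReal 0 1 := by
  funext x
  simp [stdPdf, gaussianPDFReal]

lemma stdPdf_pos (x : ℝ) : 0 < stdPdf x := by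
  rw [stdPdf_eq_gaussianPDFReal]
  exact gaussianPDFReal_pos _ _ _ one_ne_zero

lemma integrable_stdPdf : Integrable stdPdf := by
  rw [stdPdf_eq_gaussianPDFReal]
  exact integrable_gaussianPDFReal _ _

lemma continuous_stdPdf : Continuous stdPdf := by
  unfold stdPdf
  fun_prop

lemma stdPdf_def : stdPdf = fun x => (√(2 * π))⁻¹ * exp (-x ^ 2 / 2) := rfl

lemma hasDerivAt_stdPdf (x : ℝ) : HasDerivAt stdPdf (-x * stdPdf x) x := by
  have h : HasDerivAt (fun y : ℝ => -y ^ 2 / 2) (-x) x :=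
    ((hasDerivAt_pow 2 x).neg.div_const 2).congr_deriv (by ring)
  rw [stdPdf_def]
  exact (h.exp.const_mul _).congr_deriv (by ring)

lemma tendsto_stdPdf_atBot : Tendsto stdPdf atBot (𝓝 0) := by
  have hsq : Tendsto (fun x : ℝ => -x ^ 2 / 2) atBot atBot := by
    have h := (tendsto_pow_atTop (α := ℝ) two_ne_zero).comp tendsto_abs_atBot_atTop
    simp only [Function.comp_def, sq_abs] at h
    exact (tendsto_neg_atTop_atBot.comp h).atBot_div_const two_pos
  rw [stdPdf_def]
  simpa using (tendsto_exp_atBot.comp hsq).const_mul (√(2 * π))⁻¹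

lemma stdCdf_eq_cdf_gaussianReal : stdCdf = cdf (gaussianReal 0 1) := by
  funext x
  rw [cdf_eq_real, measureReal_def, gaussianReal_apply_eq_integral _ one_ne_zero,
    ENNReal.toReal_ofReal (setIntegral_nonneg measurableSet_Iic
      fun t _ => gaussianPDFReal_nonneg _ _ t), stdCdf, stdPdf_eq_gaussianPDFReal]

lemma tendsto_stdCdf_atBot : Tendsto stdCdf atBot (𝓝 0) :=
  stdCdf_eq_cdf_gaussianReal ▸ tendsto_cdf_atBot _

lemma stdCdf_pos (x : ℝ) : 0 < stdCdf x := by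
  rw [stdCdf, setIntegral_pos_iff_support_of_nonneg_ae
    (ae_of_all _ fun t => (stdPdf_pos t).le) integrable_stdPdf.integrableOn]
  simp [Function.support, (stdPdf_pos _).ne']

lemma hasDerivAt_stdCdf (x : ℝ) : HasDerivAt stdCdf (stdPdf x) x :=
  hasDerivAt_integral_Iic integrable_stdPdf continuous_stdPdf x

lemma sq_add_two_mul_sqrt_add_mul_pos {y : ℝ} (hy : y < 0) :
    0 < (y ^ 2 + 2) * √(y ^ 2 + 8) + y * (y ^ 2 + 6) := by
  have hA : 0 < (y ^ 2 + 2) * √(y ^ 2 + 8) := by positivity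
  have hC : 0 < -(y * (y ^ 2 + 6)) := by nlinarith
  have hsq : ((y ^ 2 + 2) * √(y ^ 2 + 8)) ^ 2 = (y * (y ^ 2 + 6)) ^ 2 + 32 := by
    rw [mul_pow, sq_sqrt (by positivity)]
    ring
  nlinarith

noncomputable def millsGap (y : ℝ) : ℝ := 4 * stdPdf y / (√(y ^ 2 + 8) - 3 * y) - stdCdf y

lemma hasDerivAt_millsGap {y : ℝ} (hy : y < 0) :
    HasDerivAt millsGap
      (2 * stdPdf y * ((y ^ 2 + 2) * √(y ^ 2 + 8) + y * (y ^ 2 + 6)) /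
        (√(y ^ 2 + 8) * (√(y ^ 2 + 8) - 3 * y) ^ 2)) y := by
  have hs : 0 < √(y ^ 2 + 8) := by positivity
  have hs2 : √(y ^ 2 + 8) ^ 2 = y ^ 2 + 8 := sq_sqrt (by positivity)
  have hu : 0 < √(y ^ 2 + 8) - 3 * y := by linarith
  have hsqrt : HasDerivAt (fun t => √(t ^ 2 + 8)) (y / √(y ^ 2 + 8)) y := by
    convert ((hasDerivAt_pow 2 y).add_const 8).sqrt (by positivity) using 1
    field_simp
    ring
  have hu' : HasDerivAt (fun t => √(t ^ 2 + 8) - 3 * t) (y / √(y ^ 2 + 8) - 3) y :=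
    (hsqrt.fun_sub ((hasDerivAt_id y).const_mul 3)).congr_deriv (by ring)
  refine ((((hasDerivAt_stdPdf y).const_mul 4).fun_div hu' hu.ne').fun_sub
    (hasDerivAt_stdCdf y)).congr_deriv ?_
  have hu0 := hu.ne'
  have hs0 := hs.ne'
  set s := √(y ^ 2 + 8)
  field_simp
  have hu3 : (s - y * 3) ^ 2 ≠ 0 := pow_ne_zero 2 (by linarith)
  rw [div_sub' hu3, mul_div_assoc', div_left_inj' hu3]
  linear_combination (stdPdf y * (2 * y - s)) * hs2

lemma strictMonoOn_millsGap : StrictMonoOn millsGap (Iio 0) := by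
  refine strictMonoOn_of_hasDerivAt_pos (convex_Iio 0) isOpen_Iio
    (fun y hy => hasDerivAt_millsGap hy) fun y hy => ?_
  have hnum := sq_add_two_mul_sqrt_add_mul_pos hy
  have hφ := stdPdf_pos y
  have hs : 0 < √(y ^ 2 + 8) := by positivity
  have hden : 0 < √(y ^ 2 + 8) - 3 * y := by linarith [mem_Iio.1 hy]
  positivity

lemma tendsto_millsGap_atBot : Tendsto millsGap atBot (𝓝 0) := by
  have h3 : Tendsto (fun y : ℝ => 3 * -y) atBot atTop :=
    tendsto_neg_atBot_atTop.const_mul_atTop three_pos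
  have hden : Tendsto (fun y : ℝ => √(y ^ 2 + 8) - 3 * y) atBot atTop :=
    tendsto_atTop_mono (fun y => by linarith [sqrt_nonneg (y ^ 2 + 8)]) h3
  have h := ((tendsto_stdPdf_atBot.const_mul 4).div_atTop hden).sub tendsto_stdCdf_atBot
  rw [sub_zero] at h
  exact h

lemma mul_stdCdf_lt_four_mul_stdPdf {x : ℝ} (hx : x < 0) :
    (√(x ^ 2 + 8) - 3 * x) * stdCdf x < 4 * stdPdf x := by
  have hu : 0 < √(x ^ 2 + 8) - 3 * x := by linarith [sqrt_nonneg (x ^ 2 + 8)]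
  have hgap : 0 < millsGap x := strictMonoOn_millsGap.lt_of_tendsto_atBot tendsto_millsGap_atBot hx
  rwa [millsGap, sub_pos, lt_div_iff₀ hu, mul_comm] at hgap

lemma hasDerivAt_tailVariance (x : ℝ) :
    HasDerivAt (fun x => 1 - x * stdPdf x / stdCdf x - stdPdf x ^ 2 / stdCdf x ^ 2)
      (stdPdf x * ((x ^ 2 - 1) * stdCdf x ^ 2 + 3 * x * stdPdf x * stdCdf x + 2 * stdPdf x ^ 2) /
        stdCdf x ^ 3) x := by
  have hΦ := (stdCdf_pos x).ne'
  have hmean := ((hasDerivAt_id' x).fun_mul (hasDerivAt_stdPdf x)).fun_div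
    (hasDerivAt_stdCdf x) hΦ
  have hsq := ((hasDerivAt_stdPdf x).fun_pow 2).fun_div ((hasDerivAt_stdCdf x).fun_pow 2)
    (pow_ne_zero 2 hΦ)
  refine (((hasDerivAt_const x 1).fun_sub hmean).fun_sub hsq).congr_deriv ?_
  field_simp
  ring

/-- The tail conditional variance `Var[X | X < x] = 1 - xφ(x)/Φ(x) - φ(x)²/Φ(x)²` of a
standard normal is strictly increasing on `(-∞, 0)`. -/
theorem stmt_3 :
    StrictMonoOn
      (fun x : ℝ => 1 - x * stdPdf x / stdCdf x - (stdPdf x) ^ 2 / (stdCdf x) ^ 2)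
      (Set.Iio 0) := by
  refine strictMonoOn_of_hasDerivAt_pos (convex_Iio 0) isOpen_Iio
    (fun x _ => hasDerivAt_tailVariance x) fun x hx => ?_
  have hφ := stdPdf_pos x
  have hΦ := stdCdf_pos x
  have hs2 : √(x ^ 2 + 8) ^ 2 = x ^ 2 + 8 := sq_sqrt (by positivity)
  have hsΦ : 0 ≤ √(x ^ 2 + 8) * stdCdf x := by positivity
  have hbound := mul_stdCdf_lt_four_mul_stdPdf hx
  have hfactor : (x ^ 2 - 1) * stdCdf x ^ 2 + 3 * x * stdPdf x * stdCdf x + 2 * stdPdf x ^ 2 =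
      (4 * stdPdf x - (√(x ^ 2 + 8) - 3 * x) * stdCdf x) *
        (4 * stdPdf x + (√(x ^ 2 + 8) + 3 * x) * stdCdf x) / 8 := by
    linear_combination stdCdf x ^ 2 / 8 * hs2
  have hleft : 0 < 4 * stdPdf x - (√(x ^ 2 + 8) - 3 * x) * stdCdf x := by linarith
  have hright : 0 < 4 * stdPdf x + (√(x ^ 2 + 8) + 3 * x) * stdCdf x := by linarith
  rw [hfactor]
  positivity
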